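/- Barnes' first lemma (complex Gamma factor form): for complex $a,b,c,d$ with real parts large enough that the contour can be taken as the imaginary axis keeping all poles of $\Gamma_{\mathbb C}(z/2+a)\Gamma_{\mathbb C}(z/2+b)$ on the left and those of $\Gamma_{\mathbb C}(-z/2+c)\Gamma_{\mathbb C}(-z/2+d)$ on the right, one has $\int_{(\sigma)} \Gamma_{\mathbb{C}}(\tfrac{z}{2}+a)\Gamma_{\mathbb{C}}(\tfrac{z}{2}+b)\Gamma_{\mathbb{C}}(-\tfrac{z}{2}+c)\Gamma_{\mathbb{C}}(-\tfrac{z}{2}+d) \frac{dz}{2\pi\sqrt{-1}} = 4\,\frac{\Gamma_{\mathbb{C}}(a+c)\Gamma_{\mathbb{C}}(a+d)\Gamma_{\mathbb{C}}(b+c)\Gamma_{\mathbb{C}}(b+d)}{\Gamma_{\mathbb{C}}(a+b+c+d)}$. -/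

import Mathlib

/-!
By the Beta integral, `Γ(s + a) Γ(c - s) / Γ(a + c)` is the Mellin transform of the kernel
`t ↦ t^a (1 + t)^{-(a + c)}` on the strip `-Re a < Re s < Re c`, so the integrand is a product of
two Mellin transforms. Mellin inversion and Fubini turn the integral of such a product over a
vertical line into `2π ∫₀^∞ f(t) g(1/t) dt/t`; for the two kernels this is again a Beta integral,
equal to `Γ(a + d) Γ(b + c) / Γ(a + b + c + d)`. Mellin inversion needs the Mellin transform to be
integrable on the line: after `t = eˣ` it is the Fourier transform of a smooth function whose
derivatives all decay exponentially, hence it is `O(1 / (1 + ξ²))`.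
-/

open MeasureTheory

/-- The complex Gamma factor `Γ_ℂ(s) = 2 (2π)^{-s} Γ(s)`. -/
noncomputable def GammaC (s : ℂ) : ℂ := 2 * ((2 * Real.pi : ℝ) : ℂ) ^ (-s) * Complex.Gamma s

section Barnes

open Complex Set
open scoped Real FourierTransform

lemma hasDerivWithinAt_div_one_sub {x : ℝ} (hx : x ∈ Ioo (0 : ℝ) 1) :
    HasDerivWithinAt (fun x : ℝ => x / (1 - x)) ((1 - x) ^ 2)⁻¹ (Ioo 0 1) x := by
  have h1x : 1 - x ≠ 0 := (sub_pos.mpr hx.2).ne'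
  refine (((hasDerivAt_id' x).div ((hasDerivAt_id' x).const_sub 1) h1x).congr_deriv ?_)
    |>.hasDerivWithinAt
  field_simp
  ring

lemma injOn_div_one_sub : InjOn (fun x : ℝ => x / (1 - x)) (Ioo 0 1) := by
  intro x hx y hy hxy
  have h1x : 1 - x ≠ 0 := (sub_pos.mpr hx.2).ne'
  have h1y : 1 - y ≠ 0 := (sub_pos.mpr hy.2).ne'
  field_simp at hxy
  linarith

lemma image_div_one_sub : (fun x : ℝ => x / (1 - x)) '' Ioo 0 1 = Ioi 0 := by
  refine Subset.antisymm ?_ fun t ht => ⟨t / (1 + t), ?_, ?_⟩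
  · rintro _ ⟨x, hx, rfl⟩
    exact div_pos hx.1 (sub_pos.mpr hx.2)
  · have ht1 : 0 < 1 + t := by linarith [mem_Ioi.mp ht]
    exact ⟨div_pos ht ht1, (div_lt_one ht1).mpr (by linarith)⟩
  · have ht1 : 1 + t ≠ 0 := by linarith [mem_Ioi.mp ht]
    field_simp
    ring

lemma abs_deriv_smul_comp_div_one_sub {p q : ℂ} {x : ℝ} (hx : x ∈ Ioo (0 : ℝ) 1) :
    |((1 - x) ^ 2)⁻¹| • (((x / (1 - x) : ℝ) : ℂ) ^ (p - 1) *
      ((1 + x / (1 - x) : ℝ) : ℂ) ^ (-(p + q)))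
      = (x : ℂ) ^ (p - 1) * ((1 - x : ℝ) : ℂ) ^ (q - 1) := by
  have hu : 0 < 1 - x := sub_pos.mpr hx.2
  have hu0 : ((1 - x : ℝ) : ℂ) ≠ 0 := ofReal_ne_zero.mpr hu.ne'
  have h1 : (1 + x / (1 - x) : ℝ) = (1 - x)⁻¹ := by field_simp; ring
  have hsplit : ((1 - x : ℝ) : ℂ) ^ (p + q)
      = ((1 - x : ℝ) : ℂ) ^ (p - 1) * ((1 - x : ℝ) : ℂ) ^ (q - 1) * ((1 - x : ℝ) : ℂ) ^ 2 := by
    rw [← cpow_ofNat, ← cpow_add _ _ hu0, ← cpow_add _ _ hu0]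
    ring_nf
  rw [h1, abs_of_pos (by positivity), real_smul, ofReal_div,
    div_cpow_ofReal_nonneg hx.1.le hu.le, ofReal_inv (1 - x), inv_cpow_ofReal_nonneg hu.le,
    cpow_neg, inv_inv, hsplit, ofReal_inv, ofReal_pow]
  have hpow : ((1 - x : ℝ) : ℂ) ^ (p - 1) ≠ 0 := cpow_ne_zero_iff.mpr (.inl hu0)
  field_simp

lemma betaIntegral_eq_integral_Ioo (p q : ℂ) :
    betaIntegral p q = ∫ x in Ioo (0 : ℝ) 1, (x : ℂ) ^ (p - 1) * ((1 - x : ℝ) : ℂ) ^ (q - 1) := by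
  rw [betaIntegral, intervalIntegral.integral_of_le zero_le_one, integral_Ioc_eq_integral_Ioo]
  push_cast
  rfl

theorem integral_Ioi_cpow_mul_one_add_cpow {p q : ℂ} (hp : 0 < p.re) (hq : 0 < q.re) :
    ∫ t in Ioi (0 : ℝ), (t : ℂ) ^ (p - 1) * ((1 + t : ℝ) : ℂ) ^ (-(p + q))
      = Gamma p * Gamma q / Gamma (p + q) := by
  rw [← betaIntegral_eq_Gamma_mul_div p q hp hq, betaIntegral_eq_integral_Ioo,
    ← image_div_one_sub, integral_image_eq_integral_abs_deriv_smul measurableSet_Ioo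
      (fun _ hx => hasDerivWithinAt_div_one_sub hx) injOn_div_one_sub]
  exact setIntegral_congr_fun measurableSet_Ioo fun x hx => abs_deriv_smul_comp_div_one_sub hx

theorem integrableOn_Ioi_cpow_mul_one_add_cpow {p q : ℂ} (hp : 0 < p.re) (hq : 0 < q.re) :
    IntegrableOn (fun t : ℝ => (t : ℂ) ^ (p - 1) * ((1 + t : ℝ) : ℂ) ^ (-(p + q))) (Ioi 0) := by
  rw [← image_div_one_sub, integrableOn_image_iff_integrableOn_abs_deriv_smul measurableSet_Ioo
    (fun _ hx => hasDerivWithinAt_div_one_sub hx) injOn_div_one_sub]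
  refine IntegrableOn.congr_fun ?_ (fun x hx => (abs_deriv_smul_comp_div_one_sub hx).symm)
    measurableSet_Ioo
  have := (betaIntegral_convergent hp hq).1.mono_set Ioo_subset_Ioc_self
  push_cast at this ⊢
  exact this

theorem integrable_fourier_of_contDiff_two {E : Type*} [NormedAddCommGroup E] [NormedSpace ℂ E]
    {f : ℝ → E} (hf : ContDiff ℝ 2 f) (hint : ∀ n ≤ 2, Integrable (iteratedDeriv n f)) :
    Integrable (𝓕 f) := by
  have hf0 : Integrable f := by simpa using hint 0 (by norm_num)
  have hcont : Continuous (𝓕 f) :=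
    VectorFourier.fourierIntegral_continuous Real.continuous_fourierChar continuous_inner hf0
  set C₀ := ∫ x, ‖f x‖
  set C₂ := ∫ x, ‖iteratedDeriv 2 f x‖
  refine (integrable_inv_one_add_sq.const_mul (C₀ + C₂ / (2 * π) ^ 2)).mono'
    hcont.aestronglyMeasurable (.of_forall fun x => ?_)
  have h₀ : ‖𝓕 f x‖ ≤ C₀ := VectorFourier.norm_fourierIntegral_le_integral_norm _ _ _ _ _
  have h₂ : x ^ 2 * ‖𝓕 f x‖ ≤ C₂ / (2 * π) ^ 2 := by
    have h : ‖𝓕 (iteratedDeriv 2 f) x‖ ≤ C₂ :=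
      VectorFourier.norm_fourierIntegral_le_integral_norm _ _ _ _ _
    rw [le_div_iff₀ (by positivity)]
    rw [Real.fourier_iteratedDeriv (N := 2) hf (fun n hn => hint n (by exact_mod_cast hn)) le_rfl]
      at h
    simpa [norm_smul, mul_pow, _root_.abs_of_pos Real.pi_pos, mul_comm, mul_left_comm, mul_assoc]
      using h
  rw [← div_eq_mul_inv, le_div_iff₀ (by positivity)]
  linarith

theorem integrable_cpow_smul_mul_verticalLine {f : ℝ → ℂ} {G : ℂ → ℂ} {σ : ℝ}
    (hf : MellinConvergent f σ) (hG : VerticalIntegrable G σ) :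
    Integrable (fun z : ℝ × ℝ => (z.2 : ℂ) ^ ((σ + z.1 * I : ℂ) - 1) • f z.2 * G (σ + z.1 * I))
      (volume.prod (volume.restrict (Ioi 0))) := by
  have hpos : ∀ᵐ z : ℝ × ℝ ∂(volume.prod (volume.restrict (Ioi 0))), 0 < z.2 := by
    rw [← Measure.restrict_univ (μ := volume), Measure.prod_restrict]
    filter_upwards [ae_restrict_mem (MeasurableSet.univ.prod measurableSet_Ioi)] with z hz
    exact hz.2
  have hmeas : Measurable fun z : ℝ × ℝ => (z.2 : ℂ) ^ (z.1 * I) :=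
    (measurable_ofReal.comp measurable_snd).pow (by fun_prop)
  refine ((hG.mul_prod hf).bdd_mul (c := 1) hmeas.aestronglyMeasurable ?_).congr ?_
  · filter_upwards [hpos] with z hz
    simp [norm_cpow_eq_rpow_re_of_pos hz]
  · filter_upwards [hpos] with z hz
    rw [smul_eq_mul, smul_eq_mul, show (σ + z.1 * I : ℂ) - 1 = z.1 * I + (σ - 1) by ring,
      cpow_add _ _ (ofReal_ne_zero.mpr hz.ne')]
    ring

theorem integral_mellin_mul_mellin {f g : ℝ → ℂ} {σ : ℝ} (hf : MellinConvergent f σ)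
    (hg : MellinConvergent g σ) (hMg : VerticalIntegrable (mellin g) σ)
    (hgc : ∀ t ∈ Ioi (0 : ℝ), ContinuousAt g t) :
    ∫ y : ℝ, mellin f (σ + y * I) * mellin g (σ + y * I)
      = 2 * π * ∫ t in Ioi (0 : ℝ), f t * g t⁻¹ / t := by
  set H : ℝ → ℝ → ℂ := fun y t => (t : ℂ) ^ ((σ + y * I : ℂ) - 1) • f t * mellin g (σ + y * I)
  have hinner : ∀ t ∈ Ioi (0 : ℝ), ∫ y, H y t = 2 * π * (f t * g t⁻¹ / t) := by
    intro t ht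
    have ht0 : (t : ℂ) ≠ 0 := ofReal_ne_zero.mpr (ne_of_gt ht)
    have ht' : t⁻¹ ∈ Ioi 0 := inv_pos.mpr (mem_Ioi.mp ht)
    have hinv := mellinInv_mellin_eq σ g ht' hg hMg (hgc _ ht')
    -- `t ^ (s - 1) = t⁻¹ * (t⁻¹) ^ (-s)`: the `y`-integral is an inverse Mellin transform at `t⁻¹`
    have hH (y : ℝ) :
        H y t = f t / t * (((t⁻¹ : ℝ) : ℂ) ^ (-(σ + y * I)) • mellin g (σ + y * I)) := by
      rw [ofReal_inv, inv_cpow_ofReal_nonneg (le_of_lt ht), ← cpow_neg, neg_neg]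
      simp only [H, smul_eq_mul]
      rw [cpow_sub _ _ ht0, cpow_one]
      ring
    rw [mellinInv, real_smul] at hinv
    rw [integral_congr_ae (.of_forall hH), integral_const_mul, ← hinv]
    generalize ∫ y : ℝ, ((t⁻¹ : ℝ) : ℂ) ^ (-(σ + y * I)) • mellin g (σ + y * I) = J
    push_cast
    field_simp
  calc ∫ y : ℝ, mellin f (σ + y * I) * mellin g (σ + y * I) = ∫ y, ∫ t in Ioi 0, H y t := by
        simp only [mellin, H, ← integral_mul_const]
    _ = ∫ t in Ioi 0, ∫ y, H y t :=
        integral_integral_swap (integrable_cpow_smul_mul_verticalLine hf hMg)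
    _ = ∫ t in Ioi 0, 2 * π * (f t * g t⁻¹ / t) := setIntegral_congr_fun measurableSet_Ioi hinner
    _ = _ := integral_const_mul _ _

noncomputable def betaKernel (a c : ℂ) (t : ℝ) : ℂ :=
  (t : ℂ) ^ a * ((1 + t : ℝ) : ℂ) ^ (-(a + c))

lemma betaKernel_div_self (p q : ℂ) {t : ℝ} (ht : 0 < t) :
    betaKernel p q t / t = (t : ℂ) ^ (p - 1) * ((1 + t : ℝ) : ℂ) ^ (-(p + q)) := by
  rw [betaKernel, cpow_sub _ _ (ofReal_ne_zero.mpr ht.ne'), cpow_one]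
  ring

lemma betaKernel_mul (a c a' c' : ℂ) {t : ℝ} (ht : 0 < t) :
    betaKernel a c t * betaKernel a' c' t = betaKernel (a + a') (c + c') t := by
  have ht0 : (t : ℂ) ≠ 0 := ofReal_ne_zero.mpr ht.ne'
  have ht1 : ((1 + t : ℝ) : ℂ) ≠ 0 := ofReal_ne_zero.mpr (by positivity)
  rw [betaKernel, betaKernel, betaKernel, cpow_add _ _ ht0,
    show -(a + a' + (c + c')) = -(a + c) + -(a' + c') by ring, cpow_add _ _ ht1]
  ring

lemma cpow_mul_betaKernel (s a c : ℂ) {t : ℝ} (ht : 0 < t) :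
    (t : ℂ) ^ s * betaKernel a c t = betaKernel (s + a) (c - s) t := by
  rw [betaKernel, betaKernel, ← mul_assoc, ← cpow_add _ _ (ofReal_ne_zero.mpr ht.ne')]
  ring_nf

lemma betaKernel_inv (a c : ℂ) {t : ℝ} (ht : 0 < t) : betaKernel a c t⁻¹ = betaKernel c a t := by
  have ht0 : (t : ℂ) ≠ 0 := ofReal_ne_zero.mpr ht.ne'
  have h1 : (1 + t⁻¹ : ℝ) = (1 + t) * t⁻¹ := by field_simp; ring
  rw [betaKernel, betaKernel, h1, ofReal_mul, mul_cpow_ofReal_nonneg (by positivity)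
    (by positivity), ofReal_inv, inv_cpow_ofReal_nonneg ht.le, inv_cpow_ofReal_nonneg ht.le,
    add_comm c a, cpow_neg (t : ℂ) (a + c), inv_inv, cpow_add _ _ ht0]
  have hta : (t : ℂ) ^ a ≠ 0 := cpow_ne_zero_iff.mpr (.inl ht0)
  field_simp

lemma continuousAt_betaKernel (a c : ℂ) {t : ℝ} (ht : 0 < t) : ContinuousAt (betaKernel a c) t :=
  (continuousAt_ofReal_cpow_const t a (Or.inr ht.ne')).mul
    ((continuousAt_ofReal_cpow_const (1 + t) _ (Or.inr (by positivity))).comp (by fun_prop))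

lemma cpow_sub_one_smul_betaKernel (s a c : ℂ) {t : ℝ} (ht : 0 < t) :
    (t : ℂ) ^ (s - 1) • betaKernel a c t = betaKernel (s + a) (c - s) t / t := by
  rw [smul_eq_mul, cpow_sub _ _ (ofReal_ne_zero.mpr ht.ne'), cpow_one, div_mul_eq_mul_div,
    cpow_mul_betaKernel s a c ht]

theorem mellinConvergent_betaKernel {a c s : ℂ} (ha : -a.re < s.re) (hc : s.re < c.re) :
    MellinConvergent (betaKernel a c) s := by
  refine (integrableOn_Ioi_cpow_mul_one_add_cpow (p := s + a) (q := c - s)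
    (by simp only [add_re]; linarith) (by simp only [sub_re]; linarith)).congr_fun
    (fun t ht => ?_) measurableSet_Ioi
  rw [cpow_sub_one_smul_betaKernel s a c ht, betaKernel_div_self _ _ ht]

theorem mellin_betaKernel {a c s : ℂ} (ha : -a.re < s.re) (hc : s.re < c.re) :
    mellin (betaKernel a c) s = Gamma (s + a) * Gamma (c - s) / Gamma (a + c) := by
  rw [mellin, setIntegral_congr_fun measurableSet_Ioi fun t ht => by
      rw [cpow_sub_one_smul_betaKernel s a c ht, betaKernel_div_self _ _ ht],
    integral_Ioi_cpow_mul_one_add_cpow (by simp only [add_re]; linarith)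
      (by simp only [sub_re]; linarith)]
  ring_nf

lemma betaKernel_exp (p q : ℂ) (x : ℝ) :
    betaKernel p q (rexp x) = cexp (p * x - (p + q) * Real.log (1 + rexp x)) := by
  rw [betaKernel, cpow_def_of_ne_zero (ofReal_ne_zero.mpr (Real.exp_pos x).ne'),
    cpow_def_of_ne_zero (ofReal_ne_zero.mpr (by positivity)), ← ofReal_log (Real.exp_pos x).le,
    ← ofReal_log (by positivity), Real.log_exp, ← Complex.exp_add]
  ring_nf

lemma betaKernel_add_one_left (p q : ℂ) {t : ℝ} (ht : 0 < t) :
    betaKernel (p + 1) q t = betaKernel p q t * (t / (1 + t) : ℝ) := by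
  have ht0 : (t : ℂ) ≠ 0 := ofReal_ne_zero.mpr ht.ne'
  have ht1 : ((1 + t : ℝ) : ℂ) ≠ 0 := ofReal_ne_zero.mpr (by positivity)
  rw [betaKernel, betaKernel, cpow_add _ _ ht0, cpow_one,
    show -(p + 1 + q) = -(p + q) + -1 by ring, cpow_add _ _ ht1, cpow_neg_one]
  push_cast
  ring

open scoped ContDiff in
lemma contDiff_betaKernel_exp (p q : ℂ) : ContDiff ℝ ∞ fun x => betaKernel p q (rexp x) := by
  simp_rw [betaKernel_exp]
  refine Complex.contDiff_exp.comp ((contDiff_const.mul ofRealCLM.contDiff).sub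
    (contDiff_const.mul (ofRealCLM.contDiff.comp ?_)))
  exact (contDiff_const.add Real.contDiff_exp).log fun x => by positivity

lemma hasDerivAt_betaKernel_exp (p q : ℂ) (x : ℝ) :
    HasDerivAt (fun x => betaKernel p q (rexp x))
      (p * betaKernel p q (rexp x) - (p + q) * betaKernel (p + 1) q (rexp x)) x := by
  have hlog : HasDerivAt (fun x => Real.log (1 + rexp x)) (rexp x / (1 + rexp x)) x :=
    ((Real.hasDerivAt_exp x).const_add 1).log (by positivity)
  have h : HasDerivAt (fun x : ℝ => cexp (p * x - (p + q) * Real.log (1 + rexp x)))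
      (cexp (p * x - (p + q) * Real.log (1 + rexp x)) *
        (p * 1 - (p + q) * (rexp x / (1 + rexp x) : ℝ))) x :=
    (((hasDerivAt_id x).ofReal_comp.const_mul p).sub (hlog.ofReal_comp.const_mul (p + q))).cexp
  rw [show (fun x => betaKernel p q (rexp x)) = _ from funext (betaKernel_exp p q),
    betaKernel_add_one_left p q (Real.exp_pos x), betaKernel_exp]
  convert h using 1
  ring

lemma norm_betaKernel_exp_le {p q : ℂ} (hp : 0 < p.re) (hq : 0 < q.re) (x : ℝ) :
    ‖betaKernel p q (rexp x)‖ ≤ rexp (-(min p.re q.re * |x|)) := by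
  rw [betaKernel_exp, norm_exp, Real.exp_le_exp]
  simp only [sub_re, mul_re, ofReal_re, ofReal_im, mul_zero, sub_zero, add_re]
  have hlog₀ : 0 ≤ Real.log (1 + rexp x) := Real.log_nonneg (by linarith [Real.exp_pos x])
  have hlogx : x ≤ Real.log (1 + rexp x) := by
    rw [Real.le_log_iff_exp_le (by positivity)]
    linarith [Real.exp_pos x]
  rcases le_or_gt 0 x with hx | hx
  · rw [abs_of_nonneg hx]
    nlinarith [min_le_right p.re q.re]
  · rw [abs_of_neg hx]
    nlinarith [min_le_left p.re q.re]

lemma exp_neg_mul_abs_le {δ : ℝ} (hδ : 0 < δ) (x : ℝ) :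
    rexp (-(δ * |x|)) ≤ (1 + 2 / δ ^ 2) * (1 + x ^ 2)⁻¹ := by
  have hexp := Real.quadratic_le_exp_of_nonneg (by positivity : 0 ≤ δ * |x|)
  rw [Real.exp_neg, ← div_eq_mul_inv, inv_le_comm₀ (by positivity) (by positivity), inv_div,
    div_le_iff₀ (by positivity)]
  have hx : (δ * |x|) ^ 2 / 2 * (2 / δ ^ 2) = x ^ 2 := by
    rw [mul_pow, sq_abs]
    field_simp
  refine le_trans ?_ (mul_le_mul_of_nonneg_right hexp (by positivity))
  have hy : 0 ≤ δ * |x| := by positivity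
  have hc : 0 ≤ 2 / δ ^ 2 := by positivity
  nlinarith [mul_nonneg hy hc]

lemma integrable_betaKernel_exp {p q : ℂ} (hp : 0 < p.re) (hq : 0 < q.re) :
    Integrable fun x => betaKernel p q (rexp x) := by
  refine (integrable_inv_one_add_sq.const_mul _).mono' ?_ (.of_forall fun x =>
    (norm_betaKernel_exp_le hp hq x).trans (exp_neg_mul_abs_le (lt_min hp hq) x))
  exact (contDiff_betaKernel_exp p q).continuous.aestronglyMeasurable

lemma integrable_iteratedDeriv_betaKernel_exp (n : ℕ) {p q : ℂ} (hp : 0 < p.re) (hq : 0 < q.re) :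
    Integrable (iteratedDeriv n fun x => betaKernel p q (rexp x)) := by
  induction n generalizing p with
  | zero => exact integrable_betaKernel_exp hp hq
  | succ n ih =>
    have hp1 : 0 < (p + 1).re := by simp only [add_re, one_re]; linarith
    rw [iteratedDeriv_succ', funext fun x => (hasDerivAt_betaKernel_exp p q x).deriv]
    refine (((ih hp).const_mul p).sub ((ih hp1).const_mul (p + q))).congr (.of_forall fun x => ?_)
    have hF : ∀ p, ContDiff ℝ n fun x => betaKernel p q (rexp x) :=
      fun p => contDiff_infty.mp (contDiff_betaKernel_exp p q) n
    rw [iteratedDeriv_fun_sub (contDiff_const.mul (hF p)).contDiffAt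
      (contDiff_const.mul (hF (p + 1))).contDiffAt, iteratedDeriv_const_mul_field,
      iteratedDeriv_const_mul_field]
    rfl

lemma integrable_fourier_betaKernel_exp {p q : ℂ} (hp : 0 < p.re) (hq : 0 < q.re) :
    Integrable (𝓕 fun x => betaKernel p q (rexp x)) :=
  integrable_fourier_of_contDiff_two (contDiff_infty.mp (contDiff_betaKernel_exp p q) 2)
    fun n _ => integrable_iteratedDeriv_betaKernel_exp n hp hq

lemma exp_smul_betaKernel_exp_neg (a c : ℂ) (σ u : ℝ) :
    rexp (-σ * u) • betaKernel a c (rexp (-u)) = betaKernel (c - σ) (σ + a) (rexp u) := by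
  have hlog : Real.log (1 + rexp (-u)) = Real.log (1 + rexp u) - u := by
    rw [Real.exp_neg, show 1 + (rexp u)⁻¹ = (1 + rexp u) * (rexp u)⁻¹ by field_simp; ring,
      Real.log_mul (by positivity) (by positivity), Real.log_inv, Real.log_exp]
    ring
  rw [betaKernel_exp, betaKernel_exp, hlog, real_smul, ofReal_exp, ← Complex.exp_add]
  push_cast
  ring_nf

theorem verticalIntegrable_mellin_betaKernel {a c : ℂ} {σ : ℝ} (ha : -a.re < σ) (hc : σ < c.re) :
    VerticalIntegrable (mellin (betaKernel a c)) σ := by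
  refine ((integrable_fourier_betaKernel_exp (p := c - σ) (q := σ + a)
    (by simp only [sub_re, ofReal_re]; linarith) (by simp only [add_re, ofReal_re]; linarith))
    |>.comp_div (by positivity : 2 * π ≠ 0)).congr (.of_forall fun y => ?_)
  have hre : ((σ : ℂ) + y * I).re = σ := by simp
  have him : ((σ : ℂ) + y * I).im = y := by simp
  simp only [mellin_eq_fourier, hre, him, exp_smul_betaKernel_exp_neg]

theorem integral_mellin_betaKernel_mul_mellin_betaKernel {a b c d : ℂ} {σ : ℝ} (ha : -a.re < σ)
    (hb : -b.re < σ) (hc : σ < c.re) (hd : σ < d.re) :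
    ∫ y : ℝ, mellin (betaKernel a c) (σ + y * I) * mellin (betaKernel b d) (σ + y * I)
      = 2 * π * (Gamma (a + d) * Gamma (b + c) / Gamma (a + b + c + d)) := by
  rw [integral_mellin_mul_mellin
    (mellinConvergent_betaKernel (by simpa using ha) (by simpa using hc))
    (mellinConvergent_betaKernel (by simpa using hb) (by simpa using hd))
    (verticalIntegrable_mellin_betaKernel hb hd) fun t ht => continuousAt_betaKernel b d ht,
    setIntegral_congr_fun measurableSet_Ioi fun t ht => by
      rw [betaKernel_inv b d ht, betaKernel_mul a c d b ht, betaKernel_div_self _ _ ht],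
    integral_Ioi_cpow_mul_one_add_cpow (by simp only [add_re]; linarith)
      (by simp only [add_re]; linarith)]
  ring_nf

lemma GammaC_mul_GammaC_div (u v : ℂ) :
    GammaC u * GammaC v / GammaC (u + v) = 2 * (Gamma u * Gamma v / Gamma (u + v)) := by
  have hP : ((2 * π : ℝ) : ℂ) ≠ 0 := ofReal_ne_zero.mpr (by positivity)
  rw [GammaC, GammaC, GammaC, neg_add, cpow_add _ _ hP]
  have hPu : ((2 * π : ℝ) : ℂ) ^ (-u) ≠ 0 := cpow_ne_zero_iff.mpr (.inl hP)
  have hPv : ((2 * π : ℝ) : ℂ) ^ (-v) ≠ 0 := cpow_ne_zero_iff.mpr (.inl hP)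
  field_simp

lemma GammaC_mul_GammaC_eq_mellin_betaKernel {a c s : ℂ} (ha : -a.re < s.re) (hc : s.re < c.re) :
    GammaC (s + a) * GammaC (c - s) = 2 * GammaC (a + c) * mellin (betaKernel a c) s := by
  have hac : 0 < (a + c).re := by simp only [add_re]; linarith
  have hGC : GammaC (a + c) ≠ 0 :=
    mul_ne_zero (mul_ne_zero two_ne_zero (cpow_ne_zero_iff.mpr (.inl (ofReal_ne_zero.mpr
      (by positivity))))) (Gamma_ne_zero_of_re_pos hac)
  have h := GammaC_mul_GammaC_div (s + a) (c - s)
  rw [show s + a + (c - s) = a + c by ring, div_eq_iff hGC] at h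
  rw [h, mellin_betaKernel ha hc]
  ring

lemma GammaC_four_mul_eq_mellin_mul_mellin {a b c d s : ℂ} (ha : -a.re < s.re)
    (hb : -b.re < s.re) (hc : s.re < c.re) (hd : s.re < d.re) :
    GammaC (s + a) * GammaC (s + b) * GammaC (c - s) * GammaC (d - s)
      = 4 * GammaC (a + c) * GammaC (b + d) *
        (mellin (betaKernel a c) s * mellin (betaKernel b d) s) := by
  calc _ = GammaC (s + a) * GammaC (c - s) * (GammaC (s + b) * GammaC (d - s)) := by ring
    _ = _ := by
      rw [GammaC_mul_GammaC_eq_mellin_betaKernel ha hc,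
        GammaC_mul_GammaC_eq_mellin_betaKernel hb hd]
      ring

end Barnes

/-- Barnes' first lemma, in complex Gamma factor form, with the contour the vertical line
`Re z = σ` separating the two families of poles. -/
theorem stmt_8 (a b c d : ℂ) (σ : ℝ) (ha : -2 * a.re < σ) (hb : -2 * b.re < σ)
    (hc : σ < 2 * c.re) (hd : σ < 2 * d.re) :
    (1 / (2 * (Real.pi : ℂ))) * ∫ y : ℝ,
        GammaC (((σ : ℂ) + Complex.I * y) / 2 + a) *
        GammaC (((σ : ℂ) + Complex.I * y) / 2 + b) *
        GammaC (-((σ : ℂ) + Complex.I * y) / 2 + c) *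
        GammaC (-((σ : ℂ) + Complex.I * y) / 2 + d)
      = 4 * (GammaC (a + c) * GammaC (a + d) * GammaC (b + c) * GammaC (b + d) /
          GammaC (a + b + c + d)) := by
  open Complex in
  set M : ℝ → ℂ := fun u => mellin (betaKernel a c) ((σ / 2 : ℝ) + u * I) *
    mellin (betaKernel b d) ((σ / 2 : ℝ) + u * I)
  have key (y : ℝ) : GammaC (((σ : ℂ) + I * y) / 2 + a) * GammaC (((σ : ℂ) + I * y) / 2 + b) *
      GammaC (-((σ : ℂ) + I * y) / 2 + c) * GammaC (-((σ : ℂ) + I * y) / 2 + d)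
      = 4 * GammaC (a + c) * GammaC (b + d) * M (y / 2) := by
    have hline : ((σ : ℂ) + I * y) / 2 = ((σ / 2 : ℝ) : ℂ) + (y / 2 : ℝ) * I := by
      push_cast
      ring
    have hre : (((σ / 2 : ℝ) : ℂ) + (y / 2 : ℝ) * I).re = σ / 2 := by simp
    rw [neg_div, hline, ← sub_eq_neg_add, ← sub_eq_neg_add, GammaC_four_mul_eq_mellin_mul_mellin]
    all_goals rw [hre]; linarith
  have hR := GammaC_mul_GammaC_div (a + d) (b + c)
  rw [show a + d + (b + c) = a + b + c + d by ring] at hR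
  rw [integral_congr_ae (.of_forall key), integral_const_mul, Measure.integral_comp_div M 2,
    integral_mellin_betaKernel_mul_mellin_betaKernel (by linarith) (by linarith) (by linarith)
      (by linarith), abs_two, real_smul, show ∀ A B C D E : ℂ, 4 * (A * B * C * D / E)
        = 4 * A * D * (B * C / E) by intros; ring, hR]
  push_cast
  field_simp
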